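/- arXiv:1704.03540 — 2 statements merged into one kernel-verified Lean document; each statement's English description precedes it below -/
import Mathlib

section
/- If the step size satisfies 0 < η < 1/(L(1 + 2√p·s)), then ‖x(t+1) − x(t)‖ → 0 as t → ∞, and for every i ∈ {1, …, p}, ‖x(t) − x^i(t)‖ → 0 as t → ∞. -/
/-!
Write `a t = ‖x(t+1) - x(t)‖²` and `Φ t = f(x(t)) + ∑ i, gᵢ(xᵢ(t))`. The descent lemma for `f`
and the prox inequality of each block give
`Φ (t+1) + (1/(2η) - L/2 - L√p s/2) a t ≤ Φ t + (L√p/2) ∑_{t-s ≤ r < t} a r`,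
where the error made by evaluating the gradient at the delayed point is controlled by
`‖x(t) - xⁱ(t)‖ ≤ ∑_{t-s ≤ r < t} √(a r)`. Each `a r` occurs in at most `s` of the delayed sums,
so telescoping against the lower bound of `F` makes `∑ a t` finite as soon as
`η < 1/(L(1 + 2√p s))`; then `a t → 0`, and the delayed sums tend to `0` as well.
-/

open Filter Topology Finset

noncomputable abbrev EE (p : ℕ) (d : Fin p → ℕ) : Type :=
  PiLp 2 (fun i : Fin p => EuclideanSpace ℝ (Fin (d i)))

theorem mul_sum_le_card_mul_sq_add_sum_sq {ι : Type*} (I : Finset ι) (x : ℝ) (y : ι → ℝ) :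
    x * ∑ r ∈ I, y r ≤ (#I * x ^ 2 + ∑ r ∈ I, y r ^ 2) / 2 := by
  rw [mul_sum, le_div_iff₀ two_pos, sum_mul]
  calc ∑ r ∈ I, x * y r * 2 ≤ ∑ r ∈ I, (x ^ 2 + y r ^ 2) :=
        sum_le_sum fun r _ => by linarith [two_mul_le_add_sq x (y r)]
    _ = #I * x ^ 2 + ∑ r ∈ I, y r ^ 2 := by rw [sum_add_distrib, sum_const, nsmul_eq_mul]

theorem sum_range_sum_Ico_sub_le {a : ℕ → ℝ} (ha : ∀ n, 0 ≤ a n) (s N : ℕ) :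
    ∑ t ∈ range N, ∑ r ∈ Ico (t - s) t, a r ≤ s * ∑ t ∈ range N, a t := by
  rw [sum_comm' (t' := range N) (s' := fun r => {t ∈ range N | r < t ∧ t ≤ r + s})
    (fun t r => by simp only [mem_range, mem_Ico, mem_filter]; omega), mul_sum]
  refine sum_le_sum fun r _ => ?_
  rw [sum_const, nsmul_eq_mul]
  gcongr
  · exact ha r
  calc #{t ∈ range N | r < t ∧ t ≤ r + s} ≤ #(Ioc r (r + s)) :=
        card_le_card fun t ht => by simp only [mem_filter, mem_Ioc] at ht ⊢; exact ht.2
    _ = s := by simp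

theorem summable_of_add_le_add_sum_Ico {Φ a : ℕ → ℝ} {m c K : ℝ} {s : ℕ} (ha : ∀ n, 0 ≤ a n)
    (hΦ : ∀ n, m ≤ Φ n) (hK : 0 ≤ K) (hc : K * s < c)
    (hstep : ∀ t, Φ (t + 1) + c * a t ≤ Φ t + K * ∑ r ∈ Ico (t - s) t, a r) : Summable a := by
  have htelescope : ∀ N, Φ N + c * ∑ t ∈ range N, a t
      ≤ Φ 0 + K * ∑ t ∈ range N, ∑ r ∈ Ico (t - s) t, a r := by
    intro N
    induction N with
    | zero => simp
    | succ N ih =>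
      simp only [sum_range_succ, mul_add]
      linarith [hstep N]
  refine summable_of_sum_range_le (c := (Φ 0 - m) / (c - K * s)) ha fun N => ?_
  rw [le_div_iff₀ (sub_pos.2 hc)]
  nlinarith [htelescope N, hΦ N, mul_le_mul_of_nonneg_left (sum_range_sum_Ico_sub_le ha s N) hK]

theorem tendsto_sum_Ico_sub_nhds_zero {E : Type*} [NormedAddCommGroup E] {u : ℕ → E}
    (hu : Tendsto u atTop (𝓝 0)) (s : ℕ) :
    Tendsto (fun t => ∑ r ∈ Ico (t - s) t, u r) atTop (𝓝 0) := by
  have hshift : Tendsto (fun t => ∑ k ∈ range s, u (t - s + k)) atTop (𝓝 0) := by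
    simpa using tendsto_finsetSum (range s) fun k _ =>
      hu.comp ((tendsto_add_atTop_nat k).comp (tendsto_sub_atTop_nat s))
  refine hshift.congr' ?_
  filter_upwards [eventually_ge_atTop s] with t ht
  rw [sum_Ico_eq_sum_range, Nat.sub_sub_self ht]

theorem le_add_inner_add_sq_of_lipschitz_gradient {E : Type*} [NormedAddCommGroup E]
    [InnerProductSpace ℝ E] [CompleteSpace E] {f : E → ℝ} {f' : E → E} {L : ℝ}
    (hf : ∀ y, HasGradientAt f (f' y) y) (hlip : ∀ y z, ‖f' y - f' z‖ ≤ L * ‖y - z‖) (x y : E) :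
    f y ≤ f x + inner ℝ (f' x) (y - x) + L / 2 * ‖y - x‖ ^ 2 := by
  set v := y - x
  let φ : ℝ → ℝ := fun θ => f (x + θ • v) - θ * inner ℝ (f' x) v - L / 2 * θ ^ 2 * ‖v‖ ^ 2
  have hφ : ∀ θ, HasDerivAt φ
      (inner ℝ (f' (x + θ • v)) v - inner ℝ (f' x) v - L * θ * ‖v‖ ^ 2) θ := by
    intro θ
    have hline : HasDerivAt (fun θ : ℝ => x + θ • v) v θ := by
      simpa using ((hasDerivAt_id θ).smul_const v).const_add x
    have h1 : HasDerivAt (fun θ : ℝ => f (x + θ • v)) (inner ℝ (f' (x + θ • v)) v) θ :=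
      (hf _).hasFDerivAt.comp_hasDerivAt θ hline
    have h2 : HasDerivAt (fun θ : ℝ => θ * inner ℝ (f' x) v) (inner ℝ (f' x) v) θ := by
      simpa using (hasDerivAt_id θ).mul_const (inner ℝ (f' x) v)
    have h3 : HasDerivAt (fun θ : ℝ => L / 2 * θ ^ 2 * ‖v‖ ^ 2) (L * θ * ‖v‖ ^ 2) θ := by
      have hsq : HasDerivAt (fun θ : ℝ => θ ^ 2) (2 * θ) θ := by simpa using hasDerivAt_pow 2 θ
      exact ((hsq.const_mul (L / 2)).mul_const (‖v‖ ^ 2)).congr_deriv (by ring)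
    exact (h1.sub h2).sub h3
  have hφ' : ∀ θ ∈ interior (Set.Ici (0 : ℝ)),
      inner ℝ (f' (x + θ • v)) v - inner ℝ (f' x) v - L * θ * ‖v‖ ^ 2 ≤ 0 := by
    intro θ hθ
    rw [interior_Ici, Set.mem_Ioi] at hθ
    calc inner ℝ (f' (x + θ • v)) v - inner ℝ (f' x) v - L * θ * ‖v‖ ^ 2
        = inner ℝ (f' (x + θ • v) - f' x) v - L * θ * ‖v‖ ^ 2 := by rw [inner_sub_left]
      _ ≤ L * ‖x + θ • v - x‖ * ‖v‖ - L * θ * ‖v‖ ^ 2 := by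
          gcongr
          exact (real_inner_le_norm _ _).trans
            (mul_le_mul_of_nonneg_right (hlip _ _) (norm_nonneg v))
      _ = 0 := by
          rw [add_sub_cancel_left, norm_smul, Real.norm_of_nonneg hθ.le]
          ring
  have hanti : AntitoneOn φ (Set.Ici 0) :=
    antitoneOn_of_hasDerivWithinAt_nonpos (convex_Ici 0)
      (fun θ _ => (hφ θ).continuousAt.continuousWithinAt)
      (fun θ _ => (hφ θ).hasDerivWithinAt) hφ'
  have h01 : φ 1 ≤ φ 0 := hanti Set.self_mem_Ici (Set.mem_Ici.2 zero_le_one) zero_le_one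
  simp only [φ, one_smul, zero_smul, add_zero, one_mul, zero_mul, one_pow, sub_zero,
    ne_eq, OfNat.ofNat_ne_zero, not_false_eq_true, zero_pow, mul_zero] at h01
  rw [add_sub_cancel] at h01
  linarith

namespace PiLp

variable {ι : Type*} [Fintype ι] {β : ι → Type*}

theorem norm_le_norm_of_forall_norm_apply_le [∀ i, SeminormedAddCommGroup (β i)]
    {v w : PiLp 2 β} (h : ∀ i, ‖v i‖ ≤ ‖w i‖) : ‖v‖ ≤ ‖w‖ := by
  rw [norm_eq_of_L2, norm_eq_of_L2]
  gcongr with i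
  exact h i

theorem norm_sub_le_sum_Ico_norm_sub_of_apply_eq [∀ i, SeminormedAddCommGroup (β i)]
    (X : ℕ → PiLp 2 β) {Y : PiLp 2 β} (σ : ι → ℕ) {s t : ℕ} (hσ_le : ∀ j, σ j ≤ t)
    (hσ_ge : ∀ j, t ≤ σ j + s) (hY : ∀ j, Y j = X (σ j) j) :
    ‖X t - Y‖ ≤ ∑ r ∈ Ico (t - s) t, ‖X (r + 1) - X r‖ := by
  -- `P r` has already moved block `j` from time `σ j` up to time `r`; its increments are blocks of
  -- `X (r + 1) - X r` or zero.
  let P : ℕ → PiLp 2 β := fun r => WithLp.toLp 2 fun j => X (max r (σ j)) j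
  have hXY : X t - Y = ∑ r ∈ Ico (t - s) t, (P (r + 1) - P r) := by
    rw [sum_Ico_sub P (Nat.sub_le t s)]
    ext j
    simp only [P, sub_apply, hY, max_eq_left (hσ_le j), max_eq_right (show t - s ≤ σ j by grind)]
  rw [hXY]
  refine (norm_sum_le _ _).trans (sum_le_sum fun r hr => ?_)
  refine norm_le_norm_of_forall_norm_apply_le fun j => ?_
  rcases le_or_gt (σ j) r with hr' | hr'
  · simp [P, max_eq_left hr', max_eq_left (hr'.trans r.le_succ)]
  · simp [P, max_eq_right hr'.le, max_eq_right (Nat.succ_le_of_lt hr')]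

theorem sum_norm_apply_le_sqrt_card_mul_norm [∀ i, SeminormedAddCommGroup (β i)]
    (v : PiLp 2 β) : ∑ i, ‖v i‖ ≤ √(Fintype.card ι) * ‖v‖ := by
  rw [norm_eq_of_L2, ← Real.sqrt_mul (Nat.cast_nonneg _)]
  refine Real.le_sqrt_of_sq_le ?_
  simpa using sq_sum_le_card_mul_sum_sq (s := univ) (f := fun i => ‖v i‖)

theorem sum_inner_apply_le [∀ i, NormedAddCommGroup (β i)] [∀ i, InnerProductSpace ℝ (β i)]
    (u : PiLp 2 β) (w : ι → PiLp 2 β) {C : ℝ} (hw : ∀ i, ‖w i‖ ≤ C) :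
    ∑ i, inner ℝ (u i) (w i i) ≤ √(Fintype.card ι) * ‖u‖ * C := by
  rcases isEmpty_or_nonempty ι with hι | ⟨⟨i₀⟩⟩
  · simp
  have hC : 0 ≤ C := (norm_nonneg _).trans (hw i₀)
  calc ∑ i, inner ℝ (u i) (w i i) ≤ ∑ i, ‖u i‖ * C := by
        gcongr with i
        exact (real_inner_le_norm _ _).trans (by gcongr; exact (norm_apply_le _ i).trans (hw i))
    _ = (∑ i, ‖u i‖) * C := (sum_mul ..).symm
    _ ≤ √(Fintype.card ι) * ‖u‖ * C := by gcongr; exact sum_norm_apply_le_sqrt_card_mul_norm u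

end PiLp

section Prox

variable {E : Type*} [NormedAddCommGroup E] [InnerProductSpace ℝ E] {g : E → EReal} {η : ℝ}

theorem prox_step_toReal_le (hg : ∀ z, g z ≠ ⊥) (hη : η ≠ 0) {x y v : E} (hx : g x ≠ ⊤)
    (hy : g y + ((1 / (2 * η) * ‖y - (x - η • v)‖ ^ 2 : ℝ) : EReal)
      ≤ g x + ((1 / (2 * η) * ‖x - (x - η • v)‖ ^ 2 : ℝ) : EReal)) :
    g y ≠ ⊤ ∧ (g y).toReal + 1 / (2 * η) * ‖y - x‖ ^ 2 + inner ℝ (y - x) v ≤ (g x).toReal := by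
  lift g x to ℝ using ⟨hx, hg x⟩ with a
  have hy_top : g y ≠ ⊤ := by
    rintro h
    rw [h, EReal.top_add_coe] at hy
    exact EReal.coe_ne_top _ (top_le_iff.1 (hy.trans_eq (EReal.coe_add _ _).symm))
  refine ⟨hy_top, ?_⟩
  lift g y to ℝ using ⟨hy_top, hg y⟩ with b
  simp only [EReal.toReal_coe]
  norm_cast at hy
  have hexp : y - (x - η • v) = (y - x) + η • v := by abel
  rw [hexp, sub_sub_cancel, norm_add_sq_real, real_inner_smul_right] at hy
  have : 1 / (2 * η) * (2 * (η * inner ℝ (y - x) v)) = inner ℝ (y - x) v := by field_simp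
  linarith

variable {T : Set ℕ} {y v : ℕ → E}

theorem prox_iterates_ne_top (hg : ∀ z, g z ≠ ⊥) (hη : η ≠ 0)
    (hskip : ∀ t ∉ T, y (t + 1) = y t)
    (hupd : ∀ t ∈ T, ∀ z,
      g (y (t + 1)) + ((1 / (2 * η) * ‖y (t + 1) - (y t - η • v t)‖ ^ 2 : ℝ) : EReal)
        ≤ g z + ((1 / (2 * η) * ‖z - (y t - η • v t)‖ ^ 2 : ℝ) : EReal))
    (h0 : g (y 0) ≠ ⊤) (t : ℕ) : g (y t) ≠ ⊤ := by
  induction t with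
  | zero => exact h0
  | succ t ih =>
    by_cases ht : t ∈ T
    · exact (prox_step_toReal_le hg hη ih (hupd t ht (y t))).1
    · rwa [hskip t ht]

theorem prox_iterates_toReal_le (hg : ∀ z, g z ≠ ⊥) (hη : η ≠ 0)
    (hskip : ∀ t ∉ T, y (t + 1) = y t)
    (hupd : ∀ t ∈ T, ∀ z,
      g (y (t + 1)) + ((1 / (2 * η) * ‖y (t + 1) - (y t - η • v t)‖ ^ 2 : ℝ) : EReal)
        ≤ g z + ((1 / (2 * η) * ‖z - (y t - η • v t)‖ ^ 2 : ℝ) : EReal))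
    (hfin : ∀ t, g (y t) ≠ ⊤) (t : ℕ) :
    (g (y (t + 1))).toReal + 1 / (2 * η) * ‖y (t + 1) - y t‖ ^ 2 + inner ℝ (y (t + 1) - y t) (v t)
      ≤ (g (y t)).toReal := by
  by_cases ht : t ∈ T
  · exact (prox_step_toReal_le hg hη (hfin t) (hupd t ht (y t))).2
  · simp [hskip t ht]

end Prox

theorem EReal.coe_sum {ι : Type*} (s : Finset ι) (a : ι → ℝ) :
    ((∑ i ∈ s, a i : ℝ) : EReal) = ∑ i ∈ s, (a i : EReal) :=
  map_sum (⟨⟨Real.toEReal, EReal.coe_zero⟩, EReal.coe_add⟩ : ℝ →+ EReal) a s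

theorem EReal.ne_top_of_sum_ne_top {ι : Type*} {s : Finset ι} {g : ι → EReal} (hg : ∀ i, g i ≠ ⊥)
    (h : ∑ i ∈ s, g i ≠ ⊤) {i : ι} (hi : i ∈ s) : g i ≠ ⊤ := by
  classical
  intro htop
  refine h ?_
  rw [← add_sum_erase _ _ hi, htop, EReal.top_add_of_ne_bot]
  exact sum_induction _ (· ≠ ⊥) (fun a b ha hb => EReal.add_ne_bot_iff.2 ⟨ha, hb⟩)
    EReal.zero_ne_bot fun j _ => hg j

section AsyncDescent

variable {ι : Type*} [Fintype ι] {β : ι → Type*} [∀ i, NormedAddCommGroup (β i)]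
  [∀ i, InnerProductSpace ℝ (β i)] [∀ i, CompleteSpace (β i)]
  {f : PiLp 2 β → ℝ} {f' : PiLp 2 β → PiLp 2 β} {L η : ℝ} {s : ℕ}
  {X : ℕ → PiLp 2 β} {Xl : ι → ℕ → PiLp 2 β} {G : ι → ℕ → ℝ}

theorem async_prox_descent_step (hf : ∀ y, HasGradientAt f (f' y) y)
    (hlip : ∀ y z, ‖f' y - f' z‖ ≤ L * ‖y - z‖) (hL : 0 ≤ L)
    (hprox : ∀ i t, G i (t + 1) + 1 / (2 * η) * ‖X (t + 1) i - X t i‖ ^ 2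
      + inner ℝ (X (t + 1) i - X t i) (f' (Xl i t) i) ≤ G i t)
    (hlag : ∀ i t, ‖X t - Xl i t‖ ≤ ∑ r ∈ Ico (t - s) t, ‖X (r + 1) - X r‖) (t : ℕ) :
    f (X (t + 1)) + ∑ i, G i (t + 1)
        + (1 / (2 * η) - L / 2 - L * √(Fintype.card ι) * s / 2) * ‖X (t + 1) - X t‖ ^ 2
      ≤ f (X t) + ∑ i, G i t
        + L * √(Fintype.card ι) / 2 * ∑ r ∈ Ico (t - s) t, ‖X (r + 1) - X r‖ ^ 2 := by
  set u := X (t + 1) - X t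
  set S := ∑ r ∈ Ico (t - s) t, ‖X (r + 1) - X r‖
  have hdescent := le_add_inner_add_sq_of_lipschitz_gradient hf hlip (X t) (X (t + 1))
  have hblocks : ∑ i, G i (t + 1) + 1 / (2 * η) * ‖u‖ ^ 2
      + ∑ i, inner ℝ (u i) (f' (Xl i t) i) ≤ ∑ i, G i t := by
    rw [PiLp.norm_sq_eq_of_L2, mul_sum, ← sum_add_distrib, ← sum_add_distrib]
    exact sum_le_sum fun i _ => hprox i t
  have hcross : inner ℝ (f' (X t)) u - ∑ i, inner ℝ (u i) (f' (Xl i t) i)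
      ≤ √(Fintype.card ι) * ‖u‖ * (L * S) := by
    rw [PiLp.inner_apply, ← sum_sub_distrib]
    calc ∑ i, (inner ℝ (f' (X t) i) (u i) - inner ℝ (u i) (f' (Xl i t) i))
        = ∑ i, inner ℝ (u i) ((f' (X t) - f' (Xl i t)) i) :=
          sum_congr rfl fun i _ => by
            simp only [PiLp.sub_apply, inner_sub_right, real_inner_comm (f' (X t) i)]
      _ ≤ _ := PiLp.sum_inner_apply_le u (fun i => f' (X t) - f' (Xl i t)) fun i =>
          (hlip _ _).trans (mul_le_mul_of_nonneg_left (hlag i t) hL)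
  have hamgm : ‖u‖ * S ≤ (s * ‖u‖ ^ 2 + ∑ r ∈ Ico (t - s) t, ‖X (r + 1) - X r‖ ^ 2) / 2 := by
    refine (mul_sum_le_card_mul_sq_add_sum_sq _ _ _).trans ?_
    gcongr
    exact_mod_cast (Nat.card_Ico _ _).trans_le (by omega)
  have hLn : 0 ≤ L * √(Fintype.card ι) := by positivity
  nlinarith [mul_le_mul_of_nonneg_left hamgm hLn]

theorem tendsto_of_async_prox_descent (hf : ∀ y, HasGradientAt f (f' y) y)
    (hlip : ∀ y z, ‖f' y - f' z‖ ≤ L * ‖y - z‖) (hη : 0 < η) (hL : 0 < L)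
    (hstep : η < 1 / (L * (1 + 2 * √(Fintype.card ι) * s)))
    (hprox : ∀ i t, G i (t + 1) + 1 / (2 * η) * ‖X (t + 1) i - X t i‖ ^ 2
      + inner ℝ (X (t + 1) i - X t i) (f' (Xl i t) i) ≤ G i t)
    (hlag : ∀ i t, ‖X t - Xl i t‖ ≤ ∑ r ∈ Ico (t - s) t, ‖X (r + 1) - X r‖)
    {m : ℝ} (hbdd : ∀ t, m ≤ f (X t) + ∑ i, G i t) :
    Tendsto (fun t => ‖X (t + 1) - X t‖) atTop (𝓝 0) ∧
      ∀ i, Tendsto (fun t => ‖X t - Xl i t‖) atTop (𝓝 0) := by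
  have hc : L * √(Fintype.card ι) / 2 * s
      < 1 / (2 * η) - L / 2 - L * √(Fintype.card ι) * s / 2 := by
    have h := (lt_one_div hη (by positivity)).1 hstep
    have : 1 / (2 * η) = 1 / η / 2 := by ring
    linarith
  have hsum : Summable fun t => ‖X (t + 1) - X t‖ ^ 2 :=
    summable_of_add_le_add_sum_Ico (Φ := fun t => f (X t) + ∑ i, G i t)
      (fun _ => sq_nonneg _) hbdd (by positivity) hc
      (async_prox_descent_step hf hlip hL.le hprox hlag)
  have hΔ : Tendsto (fun t => ‖X (t + 1) - X t‖) atTop (𝓝 0) := by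
    simpa using hsum.tendsto_atTop_zero.sqrt
  exact ⟨hΔ, fun i => squeeze_zero (fun _ => norm_nonneg _) (hlag i)
    (tendsto_sum_Ico_sub_nhds_zero hΔ s)⟩

end AsyncDescent

theorem stmt_3_general
    (p s : ℕ) (d : Fin p → ℕ)
    (τ : Fin p → Fin p → ℕ → ℕ)
    (hτ_le : ∀ i j t, τ i j t ≤ t)
    (hτ_ge : ∀ i j t, t ≤ τ i j t + s)
    (x : (i : Fin p) → ℕ → EuclideanSpace ℝ (Fin (d i)))
    (X : ℕ → EE p d) (hX : ∀ t i, X t i = x i t)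
    (Xl : Fin p → ℕ → EE p d) (hXl : ∀ i t j, Xl i t j = x j (τ i j t))
    (T : Fin p → Set ℕ)
    (η L : ℝ) (hη : 0 < η) (hL : 0 < L)
    (f : EE p d → ℝ) (f' : EE p d → EE p d)
    (hf : ∀ y, HasGradientAt f (f' y) y)
    (hlip : ∀ y z, ‖f' y - f' z‖ ≤ L * ‖y - z‖)
    (g : (i : Fin p) → EuclideanSpace ℝ (Fin (d i)) → EReal)
    (hg_nebot : ∀ i z, g i z ≠ ⊥)
    (F : EE p d → EReal)
    (hF : ∀ y, F y = (f y : EReal) + ∑ i, g i (y i))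
    (hF_bdd : ∃ m : ℝ, ∀ y, (m : EReal) ≤ F y)
    (hF0 : F (X 0) < ⊤)
    (hskip : ∀ i t, t ∉ T i → x i (t + 1) = x i t)
    (hupd : ∀ i t, t ∈ T i → ∀ z : EuclideanSpace ℝ (Fin (d i)),
      g i (x i (t + 1)) +
        ((1 / (2 * η) * ‖x i (t + 1) - (x i t - η • f' (Xl i t) i)‖ ^ 2 : ℝ) : EReal)
      ≤ g i z + ((1 / (2 * η) * ‖z - (x i t - η • f' (Xl i t) i)‖ ^ 2 : ℝ) : EReal))
    (hstep : η < 1 / (L * (1 + 2 * Real.sqrt p * s))) :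
    Tendsto (fun t => ‖X (t + 1) - X t‖) atTop (𝓝 0) ∧
    ∀ i : Fin p, Tendsto (fun t => ‖X t - Xl i t‖) atTop (𝓝 0) := by
  obtain ⟨m, hm⟩ := hF_bdd
  have h0 : ∀ i, g i (x i 0) ≠ ⊤ := by
    have hsum : ∑ i, g i (X 0 i) ≠ ⊤ := fun h => by simp [hF, h] at hF0
    intro i
    simpa only [hX] using EReal.ne_top_of_sum_ne_top (fun i => hg_nebot i _) hsum (mem_univ i)
  have hfin i := prox_iterates_ne_top (hg_nebot i) hη.ne' (hskip i) (hupd i) (h0 i)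
  set G : Fin p → ℕ → ℝ := fun i t => (g i (x i t)).toReal
  have hprox : ∀ i t, G i (t + 1) + 1 / (2 * η) * ‖X (t + 1) i - X t i‖ ^ 2
      + inner ℝ (X (t + 1) i - X t i) (f' (Xl i t) i) ≤ G i t := fun i t => by
    simpa only [hX] using prox_iterates_toReal_le (hg_nebot i) hη.ne' (hskip i) (hupd i) (hfin i) t
  have hlag i t : ‖X t - Xl i t‖ ≤ ∑ r ∈ Ico (t - s) t, ‖X (r + 1) - X r‖ :=
    PiLp.norm_sub_le_sum_Ico_norm_sub_of_apply_eq X (τ i · t) (hτ_le i · t) (hτ_ge i · t)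
      fun j => by rw [hXl, hX]
  have hbdd t : m ≤ f (X t) + ∑ i, G i t := by
    have hG : ∑ i, g i (X t i) = ((∑ i, G i t : ℝ) : EReal) := by
      rw [EReal.coe_sum]
      exact sum_congr rfl fun i _ => by rw [hX, EReal.coe_toReal (hfin i t) (hg_nebot i _)]
    have := hm (X t)
    rw [hF, hG] at this
    exact_mod_cast this
  exact tendsto_of_async_prox_descent hf hlip hη hL (by simpa using hstep) hprox hlag hbdd

theorem stmt_3
    (p s : ℕ) (hp : 1 ≤ p) (d : Fin p → ℕ) (hd : ∀ i, 1 ≤ d i)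
    (τ : Fin p → Fin p → ℕ → ℕ)
    (hτ_le : ∀ i j t, τ i j t ≤ t)
    (hτ_ge : ∀ i j t, t ≤ τ i j t + s)
    (hτ_self : ∀ i t, τ i i t = t)
    (x : (i : Fin p) → ℕ → EuclideanSpace ℝ (Fin (d i)))
    (X : ℕ → EE p d) (hX : ∀ t i, X t i = x i t)
    (Xl : Fin p → ℕ → EE p d) (hXl : ∀ i t j, Xl i t j = x j (τ i j t))
    (T : Fin p → Set ℕ)
    (hT : ∀ i t, ∃ k ∈ T i, t ≤ k ∧ k ≤ t + s)
    (η L : ℝ) (hη : 0 < η) (hL : 0 < L)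
    (f : EE p d → ℝ) (f' : EE p d → EE p d)
    (hf : ∀ y, HasGradientAt f (f' y) y)
    (hlip : ∀ y z, ‖f' y - f' z‖ ≤ L * ‖y - z‖)
    (g : (i : Fin p) → EuclideanSpace ℝ (Fin (d i)) → EReal)
    (hg_nebot : ∀ i z, g i z ≠ ⊥)
    (hg_proper : ∀ i, ∃ z, g i z ≠ ⊤)
    (hg_lsc : ∀ i, LowerSemicontinuous (g i))
    (F : EE p d → EReal)
    (hF : ∀ y, F y = (f y : EReal) + ∑ i, g i (y i))
    (hF_bdd : ∃ m : ℝ, ∀ y, (m : EReal) ≤ F y)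
    (hF0 : F (X 0) < ⊤)
    (hskip : ∀ i t, t ∉ T i → x i (t + 1) = x i t)
    (hupd : ∀ i t, t ∈ T i → ∀ z : EuclideanSpace ℝ (Fin (d i)),
      g i (x i (t + 1)) +
        ((1 / (2 * η) * ‖x i (t + 1) - (x i t - η • f' (Xl i t) i)‖ ^ 2 : ℝ) : EReal)
      ≤ g i z + ((1 / (2 * η) * ‖z - (x i t - η • f' (Xl i t) i)‖ ^ 2 : ℝ) : EReal))
    (hstep : η < 1 / (L * (1 + 2 * Real.sqrt p * s))) :
    Tendsto (fun t => ‖X (t + 1) - X t‖) atTop (𝓝 0) ∧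
    ∀ i : Fin p, Tendsto (fun t => ‖X t - Xl i t‖) atTop (𝓝 0) :=
  stmt_3_general p s d τ hτ_le hτ_ge x X hX Xl hXl T η L hη hL f f' hf hlip g hg_nebot F hF hF_bdd
    hF0 hskip hupd hstep
end

section
/- For every i ∈ {1, …, p} and every n ∈ ℕ, Σ_{t=0}^{n} ‖x^i(t+1) − x^i(t)‖ ≤ (2s+1)·Σ_{t=0}^{n} ‖x(t+1) − x(t)‖. Consequently, if the global sequence has finite length, i.e., Σ_{t=0}^{∞} ‖x(t+1) − x(t)‖ < ∞, then each local sequence has finite length: Σ_{t=0}^{∞} ‖x^i(t+1) − x^i(t)‖ < ∞. -/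
open Filter Topology

/-!
Block `j` of `x^i(t+1) - x^i(t)` is a difference of `x_j` at two times in the window
`[t - s, t + 1]`, so its norm is at most the length of the path of `x_j` over that window;
the triangle inequality in the `ℓ²` product turns this into the same bound for the whole vector
in terms of the global steps `‖x(k+1) - x(k)‖`. Each global step lies in at most `s + 1` windows,
which gives the constant `s + 1 ≤ 2s + 1`.
-/

lemma PiLp.norm_le_sum_of_norm_apply_le {ι κ : Type*} [Fintype ι] {β : ι → Type*}
    [∀ j, SeminormedAddCommGroup (β j)] {u : PiLp 2 β} {w : κ → PiLp 2 β} {S : Finset κ}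
    (h : ∀ j, ‖u j‖ ≤ ∑ k ∈ S, ‖w k j‖) : ‖u‖ ≤ ∑ k ∈ S, ‖w k‖ := by
  set N : κ → EuclideanSpace ℝ ι := fun k => WithLp.toLp 2 fun j => ‖w k j‖
  calc ‖u‖ ≤ ‖∑ k ∈ S, N k‖ := by
        rw [PiLp.norm_eq_of_L2, EuclideanSpace.norm_eq]
        gcongr with j
        simpa [N, WithLp.ofLp_sum, Finset.sum_apply,
          abs_of_nonneg (Finset.sum_nonneg fun k _ => norm_nonneg (w k j))] using h j
    _ ≤ ∑ k ∈ S, ‖N k‖ := norm_sum_le _ _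
    _ = ∑ k ∈ S, ‖w k‖ := by simp [N, EuclideanSpace.norm_eq, PiLp.norm_eq_of_L2]

lemma norm_sub_le_sum_Ico {E : Type*} [SeminormedAddCommGroup E] (y : ℕ → E) {m n a b : ℕ}
    (ha : a ∈ Finset.Icc m n) (hb : b ∈ Finset.Icc m n) :
    ‖y b - y a‖ ≤ ∑ k ∈ Finset.Ico m n, ‖y (k + 1) - y k‖ := by
  wlog hab : a ≤ b generalizing a b
  · rw [norm_sub_rev]; exact this hb ha (by omega)
  rw [Finset.mem_Icc] at ha hb
  calc ‖y b - y a‖ = dist (y a) (y b) := (dist_eq_norm' _ _).symm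
    _ ≤ ∑ k ∈ Finset.Ico a b, ‖y (k + 1) - y k‖ := by
        simpa only [dist_eq_norm'] using dist_le_Ico_sum_dist y hab
    _ ≤ ∑ k ∈ Finset.Ico m n, ‖y (k + 1) - y k‖ :=
        Finset.sum_le_sum_of_subset_of_nonneg (Finset.Ico_subset_Ico ha.1 hb.2)
          fun _ _ _ => norm_nonneg _

lemma sum_range_sum_Ico_sub_le_s12 {g : ℕ → ℝ} (hg : ∀ k, 0 ≤ g k) (s N : ℕ) :
    ∑ t ∈ Finset.range N, ∑ k ∈ Finset.Ico (t - s) (t + 1), g k ≤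
      (s + 1) * ∑ k ∈ Finset.range N, g k := by
  rw [Finset.sum_comm' (t' := Finset.range N)
    (s' := fun k => (Finset.Icc k (k + s)).filter (· < N)) (by
      intro t k
      simp only [Finset.mem_range, Finset.mem_Ico, Finset.mem_filter, Finset.mem_Icc]
      omega),
    Finset.mul_sum]
  refine Finset.sum_le_sum fun k _ => ?_
  rw [Finset.sum_const, nsmul_eq_mul]
  gcongr
  · exact hg k
  calc (((Finset.Icc k (k + s)).filter (· < N)).card : ℝ) ≤ (Finset.Icc k (k + s)).card := by
        exact_mod_cast Finset.card_filter_le _ _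
    _ = s + 1 := by rw [Nat.card_Icc, add_assoc, add_tsub_cancel_left]; push_cast; rfl

theorem stmt_12_general
    (p s : ℕ) (d : Fin p → ℕ)
    (τ : Fin p → Fin p → ℕ → ℕ)
    (hτ_le : ∀ i j t, τ i j t ≤ t)
    (hτ_ge : ∀ i j t, t ≤ τ i j t + s)
    (x : (i : Fin p) → ℕ → EuclideanSpace ℝ (Fin (d i)))
    (X : ℕ → EE p d) (hX : ∀ t i, X t i = x i t)
    (Xl : Fin p → ℕ → EE p d) (hXl : ∀ i t j, Xl i t j = x j (τ i j t))
    :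
    (∀ (i : Fin p) (n : ℕ),
      ∑ t ∈ Finset.range (n + 1), ‖Xl i (t + 1) - Xl i t‖ ≤
        (2 * s + 1) * ∑ t ∈ Finset.range (n + 1), ‖X (t + 1) - X t‖) ∧
    (Summable (fun t => ‖X (t + 1) - X t‖) →
      ∀ i : Fin p, Summable (fun t => ‖Xl i (t + 1) - Xl i t‖)) := by
  have hτ_mem : ∀ i j t, τ i j t ∈ Finset.Icc (t - s) t := fun i j t =>
    Finset.mem_Icc.2 ⟨by have := hτ_ge i j t; omega, hτ_le i j t⟩
  have hstep : ∀ i t, ‖Xl i (t + 1) - Xl i t‖ ≤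
      ∑ k ∈ Finset.Ico (t - s) (t + 1), ‖X (k + 1) - X k‖ := by
    refine fun i t => PiLp.norm_le_sum_of_norm_apply_le fun j => ?_
    simpa only [PiLp.sub_apply, hX, hXl] using norm_sub_le_sum_Ico (x j)
      (Finset.Icc_subset_Icc_right (by omega) (hτ_mem i j t))
      (Finset.Icc_subset_Icc_left (by omega) (hτ_mem i j (t + 1)))
  have hbound : ∀ i N, ∑ t ∈ Finset.range N, ‖Xl i (t + 1) - Xl i t‖ ≤
      (s + 1) * ∑ t ∈ Finset.range N, ‖X (t + 1) - X t‖ := fun i N =>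
    (Finset.sum_le_sum fun t _ => hstep i t).trans
      (sum_range_sum_Ico_sub_le_s12 (fun _ => norm_nonneg _) s N)
  refine ⟨fun i n => (hbound i (n + 1)).trans ?_, fun hsum i => ?_⟩
  · gcongr
    linarith
  · refine summable_of_sum_range_le (c := (s + 1) * ∑' t, ‖X (t + 1) - X t‖)
      (fun _ => norm_nonneg _) fun N => (hbound i N).trans ?_
    gcongr
    exact hsum.sum_le_tsum _ fun _ _ => norm_nonneg _

theorem stmt_12
    (p s : ℕ) (hp : 1 ≤ p) (d : Fin p → ℕ) (hd : ∀ i, 1 ≤ d i)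
    (τ : Fin p → Fin p → ℕ → ℕ)
    (hτ_le : ∀ i j t, τ i j t ≤ t)
    (hτ_ge : ∀ i j t, t ≤ τ i j t + s)
    (hτ_self : ∀ i t, τ i i t = t)
    (x : (i : Fin p) → ℕ → EuclideanSpace ℝ (Fin (d i)))
    (X : ℕ → EE p d) (hX : ∀ t i, X t i = x i t)
    (Xl : Fin p → ℕ → EE p d) (hXl : ∀ i t j, Xl i t j = x j (τ i j t))
    :
    (∀ (i : Fin p) (n : ℕ),
      ∑ t ∈ Finset.range (n + 1), ‖Xl i (t + 1) - Xl i t‖ ≤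
        (2 * s + 1) * ∑ t ∈ Finset.range (n + 1), ‖X (t + 1) - X t‖) ∧
    (Summable (fun t => ‖X (t + 1) - X t‖) →
      ∀ i : Fin p, Summable (fun t => ‖Xl i (t + 1) - Xl i t‖)) :=
  stmt_12_general p s d τ hτ_le hτ_ge x X hX Xl hXl
end
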